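/- Let (Y,d) be a compact metric space, let T be the shift map on Y^ℤ, and let d_T(x,y)=∑_{k∈ℤ} 2^{−|k|} d(x_k,y_k). Then the upper metric mean dimension of the shift equals the upper box dimension of Y: mdim(Y^ℤ, d_T, T) = dim_B(Y,d). -/

import Mathlib

open Filter Set Metric Function
open scoped ENNReal NNReal

noncomputable section

universe u

/-- A pair `(X̂, Y)` of random variables on a probability space `(Ω, P)` satisfying
condition `(*)_{n,ε,μ}`: `X̂` has law `μ` and the expected average distortion
`E[(1/n) ∑_{k<n} d(T^k X̂, Y_k)]` is at most `ε`. -/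
structure DistortionPair {X : Type u} [MetricSpace X] [MeasurableSpace X]
    (T : X → X) (μ : MeasureTheory.Measure X) (ε : ℝ) (n : ℕ) where
  Ω : Type u
  [mΩ : MeasurableSpace Ω]
  P : MeasureTheory.Measure Ω
  probP : MeasureTheory.IsProbabilityMeasure P
  Xh : Ω → X
  Y : Ω → Fin n → X
  measXh : Measurable Xh
  measY : Measurable Y
  law : MeasureTheory.Measure.map Xh P = μ
  distortion : ∫ ω, (∑ k : Fin n, dist (T^[(k : ℕ)] (Xh ω)) (Y ω k)) / n ∂P ≤ ε

open MeasureTheory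

section Defs

variable {X : Type u} [MetricSpace X]

/-- The Bowen dynamical distance `d_n(x,y) = max_{0 ≤ k ≤ n-1} d(T^k x, T^k y)`. -/
def dynDist (T : X → X) (n : ℕ) (x y : X) : ℝ :=
  (((Finset.range n).sup (fun k => nndist (T^[k] x) (T^[k] y)) : ℝ≥0) : ℝ)

/-- The `(n,ε)`-dynamical ball around `x`. -/
def dynBall (T : X → X) (n : ℕ) (x : X) (ε : ℝ) : Set X :=
  {y | dynDist T n x y < ε}

/-- `N_d(n,ε)`: the maximal cardinality of an `(n,ε)`-separated subset of `X`. -/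
def dynSepNum (T : X → X) (n : ℕ) (ε : ℝ) : ℕ :=
  sSup {m | ∃ E : Finset X, (∀ x ∈ E, ∀ y ∈ E, x ≠ y → ε < dynDist T n x y) ∧ E.card = m}

/-- `S(X,d,ε) = limsup_n (1/n) log N_d(n,ε)`. -/
def dynS (T : X → X) (ε : ℝ) : ℝ≥0∞ :=
  Filter.atTop.limsup fun n : ℕ =>
    ENNReal.ofReal (Real.log (dynSepNum T n ε)) / (n : ℝ≥0∞)

/-- The upper metric mean dimension `mdim(X,d,T) = limsup_{ε → 0⁺} S(X,d,ε)/|log ε|`. -/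
def mdim (T : X → X) : ℝ≥0∞ :=
  Filter.limsup (fun ε : ℝ => dynS T ε / ENNReal.ofReal |Real.log ε|)
    (nhdsWithin 0 (Set.Ioi 0))

/-- The topological entropy `h_top(X,T) = lim_{ε → 0⁺} S(X,d,ε)`
(the limit exists by monotonicity, hence equals the `limsup`). -/
def htop (T : X → X) : ℝ≥0∞ :=
  Filter.limsup (fun ε : ℝ => dynS T ε) (nhdsWithin 0 (Set.Ioi 0))

/-- `N_μ(n,ε,δ)`: the minimal number of `(n,ε)`-dynamical balls needed to cover a set of
`μ`-measure strictly bigger than `1 - δ`. -/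
def dynCovNum [MeasurableSpace X] (T : X → X) (μ : Measure X) (n : ℕ) (ε δ : ℝ) : ℕ :=
  sInf {m | ∃ F : Finset X, F.card = m ∧
    ENNReal.ofReal (1 - δ) < μ (⋃ x ∈ F, dynBall T n x ε)}

/-- `h_μ(ε,T,δ) = limsup_n (1/n) log N_μ(n,ε,δ)`. -/
def dynH [MeasurableSpace X] (T : X → X) (μ : Measure X) (ε δ : ℝ) : ℝ≥0∞ :=
  Filter.atTop.limsup fun n : ℕ =>
    ENNReal.ofReal (Real.log (dynCovNum T μ n ε δ)) / (n : ℝ≥0∞)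

/-- The average dynamical distance `d̃_n(x,y) = (1/n) ∑_{k<n} d(T^k x, T^k y)`. -/
def avgDist (T : X → X) (n : ℕ) (x y : X) : ℝ :=
  (∑ k ∈ Finset.range n, dist (T^[k] x) (T^[k] y)) / n

/-- The `(n,ε)`-average dynamical ball around `x`. -/
def avgBall (T : X → X) (n : ℕ) (x : X) (ε : ℝ) : Set X :=
  {y | avgDist T n x y < ε}

/-- `Ñ_d(n,ε)`: the maximal cardinality of an `(n,ε)`-average separated subset of `X`. -/
def avgSepNum (T : X → X) (n : ℕ) (ε : ℝ) : ℕ :=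
  sSup {m | ∃ E : Finset X, (∀ x ∈ E, ∀ y ∈ E, x ≠ y → ε < avgDist T n x y) ∧ E.card = m}

/-- `S̃(X,d,ε) = limsup_n (1/n) log Ñ_d(n,ε)`. -/
def avgS (T : X → X) (ε : ℝ) : ℝ≥0∞ :=
  Filter.atTop.limsup fun n : ℕ =>
    ENNReal.ofReal (Real.log (avgSepNum T n ε)) / (n : ℝ≥0∞)

/-- `Ñ_μ(n,ε,δ)`: the minimal number of `(n,ε)`-average dynamical balls needed to cover a set
of `μ`-measure strictly bigger than `1 - δ`. -/
def avgCovNum [MeasurableSpace X] (T : X → X) (μ : Measure X) (n : ℕ) (ε δ : ℝ) : ℕ :=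
  sInf {m | ∃ F : Finset X, F.card = m ∧
    ENNReal.ofReal (1 - δ) < μ (⋃ x ∈ F, avgBall T n x ε)}

/-- `h̃_μ(ε,T,δ) = limsup_n (1/n) log Ñ_μ(n,ε,δ)`. -/
def avgH [MeasurableSpace X] (T : X → X) (μ : Measure X) (ε δ : ℝ) : ℝ≥0∞ :=
  Filter.atTop.limsup fun n : ℕ =>
    ENNReal.ofReal (Real.log (avgCovNum T μ n ε δ)) / (n : ℝ≥0∞)

/-- `h̃_μ(T,δ) = lim_{ε → 0⁺} h̃_μ(ε,T,δ)` (the limit exists by monotonicity, hence equals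
the `limsup`). -/
def avgHlim [MeasurableSpace X] (T : X → X) (μ : Measure X) (δ : ℝ) : ℝ≥0∞ :=
  Filter.limsup (fun ε : ℝ => avgH T μ ε δ) (nhdsWithin 0 (Set.Ioi 0))

end Defs

/-- `N(ε)`: the maximal cardinality of an `ε`-separated subset of `Y`. -/
def sepNum (Y : Type*) [MetricSpace Y] (ε : ℝ) : ℕ :=
  sSup {m | ∃ E : Finset Y, (∀ x ∈ E, ∀ y ∈ E, x ≠ y → ε < dist x y) ∧ E.card = m}

/-- The upper box (Minkowski) dimension `limsup_{ε → 0⁺} log N(ε) / |log ε|`. -/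
def upperBoxDim (Y : Type*) [MetricSpace Y] : ℝ≥0∞ :=
  Filter.limsup
    (fun ε : ℝ => ENNReal.ofReal (Real.log (sepNum Y ε)) / ENNReal.ofReal |Real.log ε|)
    (nhdsWithin 0 (Set.Ioi 0))

section Entropy

variable {X : Type u} [MeasurableSpace X]

/-- The entropy contribution `-μ(A) log μ(A)` of one cell (nonnegative when `μ(A) ≤ 1`). -/
def cellEnt (μ : Measure X) (A : Set X) : ℝ≥0∞ :=
  ENNReal.ofReal (-((μ A).toReal * Real.log (μ A).toReal))

/-- `H_μ(P ∨ T⁻¹P ∨ ⋯ ∨ T^{-(n-1)}P)` for the finite partition `P` indexed by `Fin m`. -/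
def refinedEnt (μ : Measure X) (T : X → X) {m : ℕ} (P : Fin m → Set X) (n : ℕ) : ℝ≥0∞ :=
  ∑ s : Fin n → Fin m, cellEnt μ (⋂ k : Fin n, T^[(k : ℕ)] ⁻¹' P (s k))

/-- `h_μ(P,T) = inf_{n ≥ 1} (1/n) H_μ(Pⁿ)`. -/
def entPart (μ : Measure X) (T : X → X) {m : ℕ} (P : Fin m → Set X) : ℝ≥0∞ :=
  ⨅ n : ℕ, refinedEnt μ T P (n + 1) / ((n + 1 : ℕ) : ℝ≥0∞)

/-- The measure-theoretic (Kolmogorov–Sinai) entropy `h_μ(T) = sup_P h_μ(P,T)`, the supremum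
over all finite measurable partitions of `X`. -/
def KSentropy (μ : Measure X) (T : X → X) : ℝ≥0∞ :=
  ⨆ (m : ℕ) (P : Fin m → Set X) (_ : ∀ i, MeasurableSet (P i))
    (_ : Pairwise (Function.onFun Disjoint P)) (_ : (⋃ i, P i) = Set.univ),
    entPart μ T P

end Entropy

section RD

open scoped Classical in
/-- The Kullback–Leibler divergence `∫ log (dp/dq) dp` (with value `∞` if `p` is not
absolutely continuous w.r.t. `q` or the integrand is not integrable). -/
def klDiv {α : Type*} [MeasurableSpace α] (p q : Measure α) : ℝ≥0∞ :=
  if p ≪ q ∧ Integrable (fun x => Real.log (p.rnDeriv q x).toReal) p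
  then ENNReal.ofReal (∫ x, Real.log (p.rnDeriv q x).toReal ∂p)
  else ⊤

/-- The mutual information `I(U,V)`: the Kullback–Leibler divergence of the joint law of
`(U,V)` with respect to the product of the laws of `U` and `V`. -/
def mutualInfo {Ω α β : Type*} [MeasurableSpace Ω] [MeasurableSpace α] [MeasurableSpace β]
    (P : Measure Ω) (U : Ω → α) (V : Ω → β) : ℝ≥0∞ :=
  klDiv (Measure.map (fun ω => (U ω, V ω)) P)
    ((Measure.map U P).prod (Measure.map V P))

/-- The rate distortion function `R_μ(ε) = inf (1/n) I(X̂,Y)`, the infimum over all `n ≥ 1`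
and all pairs `(X̂,Y)` satisfying condition `(*)_{n,ε,μ}`. -/
def rateDistortion {X : Type u} [MetricSpace X] [MeasurableSpace X]
    (T : X → X) (μ : Measure X) (ε : ℝ) : ℝ≥0∞ :=
  ⨅ (n : ℕ) (_ : 0 < n) (pair : DistortionPair T μ ε n),
    @mutualInfo pair.Ω X (Fin n → X) pair.mΩ _ _ pair.P pair.Xh pair.Y / (n : ℝ≥0∞)

end RD

end

/-! The coordinate at time `0` is `1`-Lipschitz for `d_T`, so the `n`-periodic sequences with
values in an `ε`-separated set `F ⊆ Y` form an `(n,ε)`-separated set: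
`N(ε)^n ≤ N_{d_T}(n,ε)`.
Conversely, up to an error `ε/4` the distance `d_T` only sees a fixed window `[-M, M]` of
coordinates, so replacing the coordinates in `[-M, M+n]` by nearest points of a maximal
`ε/c`-separated set (`c = 4 ∑ 2^{-|k|}`) is injective on `(n,ε)`-separated sets:
`N_{d_T}(n,ε) ≤ N(ε/c)^(n+2M+1)`. Hence `log N(ε) ≤ S(ε) ≤ log N(ε/c)`, and
`|log (ε/c)| / |log ε| → 1` makes the two dimensions equal. -/

open Topology

lemma Real.log_natCast_le_log_natCast {a b : ℕ} (h : a ≤ b) : Real.log a ≤ Real.log b := by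
  rcases a.eq_zero_or_pos with rfl | ha
  · simpa using Real.log_natCast_nonneg b
  · exact Real.log_le_log (by exact_mod_cast ha) (by exact_mod_cast h)

lemma ENNReal.ofReal_div_natCast (x : ℝ) {n : ℕ} (hn : n ≠ 0) :
    ENNReal.ofReal x / n = ENNReal.ofReal (x / n) := by
  rw [ENNReal.ofReal_div_of_pos (by positivity), ENNReal.ofReal_natCast]

lemma ENNReal.div_mul_div_cancel_of_ne (x z : ℝ≥0∞) {y : ℝ≥0∞} (h0 : y ≠ 0)
    (ht : y ≠ ⊤) : x / y * (y / z) = x / z := by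
  rw [div_eq_mul_inv x, div_eq_mul_inv y, mul_assoc, ENNReal.inv_mul_cancel_left h0 ht,
    div_eq_mul_inv]

lemma limsup_ofReal_log_div_le {f : ℕ → ℕ} {b a : ℕ} (h : ∀ n, f n ≤ b ^ (n + a)) :
    atTop.limsup (fun n : ℕ => ENNReal.ofReal (Real.log (f n)) / n)
      ≤ ENNReal.ofReal (Real.log b) := by
  have hlim : Tendsto (fun n : ℕ => ENNReal.ofReal ((1 + a / n) * Real.log b)) atTop
      (𝓝 (ENNReal.ofReal (Real.log b))) := by
    have := ((tendsto_const_div_atTop_nhds_zero_nat (a : ℝ)).const_add 1).mul_const (Real.log b)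
    simpa using ENNReal.tendsto_ofReal this
  rw [← hlim.limsup_eq]
  refine limsup_le_limsup (eventually_atTop.2 ⟨1, fun n hn => ?_⟩)
  have hn : (0 : ℝ) < n := by exact_mod_cast hn
  dsimp only
  rw [ENNReal.ofReal_div_natCast _ (by positivity)]
  refine ENNReal.ofReal_le_ofReal ((div_le_iff₀ hn).2 ?_)
  calc Real.log (f n) ≤ Real.log ((b ^ (n + a) : ℕ) : ℝ) :=
        Real.log_natCast_le_log_natCast (h n)
    _ = (1 + a / n) * Real.log b * n := by
      push_cast
      rw [Real.log_pow]
      field_simp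
      push_cast
      ring

lemma ofReal_log_le_limsup_ofReal_log_div {f : ℕ → ℕ} {b : ℕ}
    (h : ∀ n, n ≠ 0 → b ^ n ≤ f n) :
    ENNReal.ofReal (Real.log b)
      ≤ atTop.limsup (fun n : ℕ => ENNReal.ofReal (Real.log (f n)) / n) := by
  refine le_limsup_of_frequently_le (eventually_atTop.2 ⟨1, fun n hn => ?_⟩).frequently
  have hn0 : n ≠ 0 := Nat.one_le_iff_ne_zero.1 hn
  have hn : (0 : ℝ) < n := by exact_mod_cast hn
  rw [ENNReal.ofReal_div_natCast _ hn0]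
  refine ENNReal.ofReal_le_ofReal ((le_div_iff₀ hn).2 ?_)
  calc Real.log b * n = Real.log ((b ^ n : ℕ) : ℝ) := by push_cast; rw [Real.log_pow, mul_comm]
    _ ≤ Real.log (f n) := Real.log_natCast_le_log_natCast (h n hn0)

lemma tendsto_ofReal_abs_log_div_div_ofReal_abs_log {c : ℝ} (hc : 0 < c) :
    Tendsto (fun ε => ENNReal.ofReal |Real.log (ε / c)| / ENNReal.ofReal |Real.log ε|)
      (𝓝[>] 0) (𝓝 1) := by
  have hratio : Tendsto (fun ε => |1 - Real.log c / Real.log ε|) (𝓝[>] 0) (𝓝 1) := by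
    simpa using ((tendsto_const_nhds.div_atBot Real.tendsto_log_nhdsGT_zero).const_sub 1).abs
  rw [← ENNReal.ofReal_one]
  refine (ENNReal.tendsto_ofReal hratio).congr' ?_
  filter_upwards [Ioo_mem_nhdsGT one_pos] with ε ⟨hε0, hε1⟩
  have hlog : Real.log ε ≠ 0 := (Real.log_neg hε0 hε1).ne
  rw [← ENNReal.ofReal_div_of_pos (abs_pos.2 hlog), ← abs_div,
    Real.log_div hε0.ne' hc.ne', sub_div, div_self hlog]

lemma limsup_comp_div_div_abs_log_le (g : ℝ → ℝ≥0∞) {c : ℝ} (hc : 0 < c) :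
    limsup (fun ε => g (ε / c) / ENNReal.ofReal |Real.log ε|) (𝓝[>] 0)
      ≤ limsup (fun ε => g ε / ENNReal.ofReal |Real.log ε|) (𝓝[>] 0) := by
  let h := fun ε => g ε / ENNReal.ofReal |Real.log ε|
  let v := fun ε => ENNReal.ofReal |Real.log (ε / c)| / ENNReal.ofReal |Real.log ε|
  have hv : Tendsto v (𝓝[>] 0) (𝓝 1) := tendsto_ofReal_abs_log_div_div_ofReal_abs_log hc
  have hhv : (fun ε => g (ε / c) / ENNReal.ofReal |Real.log ε|)
      =ᶠ[𝓝[>] 0] (h ∘ (· / c)) * v := by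
    filter_upwards [Ioo_mem_nhdsGT (lt_min one_pos hc)] with ε ⟨hε0, hε⟩
    have hεc : ε / c < 1 := (div_lt_one hc).2 (hε.trans_le (min_le_right _ _))
    have hlog : ENNReal.ofReal |Real.log (ε / c)| ≠ 0 := by
      simpa using (Real.log_neg (div_pos hε0 hc) hεc).ne
    exact (ENNReal.div_mul_div_cancel_of_ne _ _ hlog ENNReal.ofReal_ne_top).symm
  have hdiv : Tendsto (· / c) (𝓝[>] (0 : ℝ)) (𝓝[>] 0) :=
    tendsto_nhdsWithin_of_tendsto_nhds_of_eventually_within _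
      (by simpa using ((continuous_id.div_const c).tendsto 0).mono_left nhdsWithin_le_nhds)
      (eventually_nhdsWithin_of_forall fun ε hε => div_pos hε hc)
  calc limsup (fun ε => g (ε / c) / ENNReal.ofReal |Real.log ε|) (𝓝[>] 0)
      = limsup ((h ∘ (· / c)) * v) (𝓝[>] 0) := limsup_congr hhv
    _ ≤ limsup (h ∘ (· / c)) (𝓝[>] 0) * limsup v (𝓝[>] 0) :=
      ENNReal.limsup_mul_le' (Or.inr (by rw [hv.limsup_eq]; exact ENNReal.one_ne_top))
        (Or.inr (by rw [hv.limsup_eq]; exact one_ne_zero))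
    _ = limsup h (map (· / c) (𝓝[>] 0)) := by rw [hv.limsup_eq, mul_one, limsup_comp]
    _ ≤ limsup h (𝓝[>] 0) := limsup_le_limsup_of_le hdiv

section Separated

variable {X : Type*} [MetricSpace X]

def IsSeparatedFinset (ε : ℝ) (E : Finset X) : Prop :=
  ∀ x ∈ E, ∀ y ∈ E, x ≠ y → ε < dist x y

def IsDynSeparated (T : X → X) (n : ℕ) (ε : ℝ) (E : Finset X) : Prop :=
  ∀ x ∈ E, ∀ y ∈ E, x ≠ y → ε < dynDist T n x y

lemma lt_dynDist_iff {T : X → X} {n : ℕ} {x y : X} {ε : ℝ} (hε : 0 ≤ ε) :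
    ε < dynDist T n x y ↔ ∃ k < n, ε < dist (T^[k] x) (T^[k] y) := by
  rw [dynDist, ← Real.toNNReal_lt_iff_lt_coe hε, Finset.lt_sup_iff]
  simp only [Finset.mem_range, Real.toNNReal_lt_iff_lt_coe hε, coe_nndist]

lemma dynSepNum_le_of_forall_card_le {T : X → X} {n : ℕ} {ε : ℝ} {B : ℕ}
    (h : ∀ E, IsDynSeparated T n ε E → E.card ≤ B) : dynSepNum T n ε ≤ B :=
  csSup_le ⟨0, ∅, by simp, rfl⟩ (by rintro _ ⟨E, hE, rfl⟩; exact h E hE)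

lemma card_le_dynSepNum {T : X → X} {n : ℕ} {ε : ℝ} {B : ℕ}
    (h : ∀ E, IsDynSeparated T n ε E → E.card ≤ B) {E : Finset X}
    (hE : IsDynSeparated T n ε E) : E.card ≤ dynSepNum T n ε :=
  le_csSup ⟨B, by rintro _ ⟨F, hF, rfl⟩; exact h F hF⟩ ⟨E, hE, rfl⟩

variable [CompactSpace X]

lemma bddAbove_card_isSeparatedFinset {ε : ℝ} (hε : 0 < ε) :
    BddAbove {m | ∃ E : Finset X, IsSeparatedFinset ε E ∧ E.card = m} := by
  obtain ⟨t, -, ht, hcover⟩ := isCompact_univ (X := X).finite_cover_balls (half_pos hε)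
  choose p hpt hp using fun z : X => mem_iUnion₂.1 (hcover (mem_univ z))
  refine ⟨ht.toFinset.card, ?_⟩
  rintro _ ⟨E, hE, rfl⟩
  refine Finset.card_le_card_of_injOn p (fun x _ => ht.mem_toFinset.2 (hpt x)) ?_
  intro x hx y hy hxy
  by_contra hne
  have hx' : dist x (p x) < ε / 2 := hp x
  have hy' : dist y (p x) < ε / 2 := hxy ▸ hp y
  linarith [dist_triangle_right x y (p x), hE x hx y hy hne]

lemma exists_isSeparatedFinset_card_eq_sepNum {ε : ℝ} (hε : 0 < ε) :
    ∃ F : Finset X, IsSeparatedFinset ε F ∧ F.card = sepNum X ε ∧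
      ∀ z, ∃ p ∈ F, dist z p ≤ ε := by
  classical
  have hbdd := bddAbove_card_isSeparatedFinset (X := X) hε
  obtain ⟨F, hF, hcard⟩ :
      sepNum X ε ∈ {m | ∃ E : Finset X, IsSeparatedFinset ε E ∧ E.card = m} :=
    Nat.sSup_mem ⟨0, ∅, by simp [IsSeparatedFinset], rfl⟩ hbdd
  refine ⟨F, hF, hcard, fun z => ?_⟩
  by_contra! hfar
  have hz : z ∉ F := fun hz => lt_asymm hε (by simpa using hfar z hz)
  have hF' : IsSeparatedFinset ε (insert z F) := by
    simp only [IsSeparatedFinset, Finset.mem_insert]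
    rintro x (rfl | hx) y (rfl | hy) hxy
    · exact absurd rfl hxy
    · exact hfar y hy
    · exact dist_comm x _ ▸ hfar x hx
    · exact hF x hx y hy hxy
  have hle : (insert z F).card ≤ sepNum X ε := le_csSup hbdd ⟨insert z F, hF', rfl⟩
  rw [Finset.card_insert_of_notMem hz, hcard] at hle
  omega

end Separated

section Shift

lemma summable_two_zpow_neg_abs : Summable fun k : ℤ => (2 : ℝ) ^ (-|k|) := by
  apply Summable.of_nat_of_neg <;>
  · simp only [abs_neg, Int.abs_natCast, zpow_neg, zpow_natCast, ← inv_pow]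
    exact summable_geometric_of_lt_one (by norm_num) (by norm_num)

variable {Y : Type*}

variable (Y) in
def intShift : (ℤ → Y) → ℤ → Y := fun x k => x (k + 1)

lemma intShift_iterate (j : ℕ) (x : ℤ → Y) : (intShift Y)^[j] x = fun k => x (k + j) := by
  induction j generalizing x with
  | zero => simp
  | succ j ih =>
    rw [Function.iterate_succ_apply, ih]
    exact funext fun k => congrArg x (by push_cast; ring)

variable [MetricSpace Y]

variable (Y) in
def IsWeightedSumDist [MetricSpace (ℤ → Y)] : Prop :=
  ∀ x y : ℤ → Y, dist x y = ∑' k : ℤ, (2 : ℝ) ^ (-|k|) * dist (x k) (y k)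

variable [CompactSpace Y]

lemma summable_two_zpow_neg_abs_mul_dist (x y : ℤ → Y) :
    Summable fun k : ℤ => (2 : ℝ) ^ (-|k|) * dist (x k) (y k) :=
  summable_two_zpow_neg_abs.mul_right (diam (univ : Set Y)) |>.of_nonneg_of_le
    (fun k => by positivity) fun k => mul_le_mul_of_nonneg_left
      (dist_le_diam_of_mem isCompact_univ.isBounded (mem_univ _) (mem_univ _)) (by positivity)

variable [MetricSpace (ℤ → Y)]

lemma IsWeightedSumDist.dist_apply_zero_le (hm : IsWeightedSumDist Y) (x y : ℤ → Y) :
    dist (x 0) (y 0) ≤ dist x y := by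
  rw [hm]
  simpa using (summable_two_zpow_neg_abs_mul_dist x y).le_tsum 0 fun k _ => by positivity

lemma IsWeightedSumDist.exists_dist_le (hm : IsWeightedSumDist Y) {ε : ℝ} (hε : 0 < ε) :
    ∃ M : ℕ, ∀ (δ : ℝ) (x y : ℤ → Y),
      (∀ j ∈ Finset.Icc (-(M : ℤ)) M, dist (x j) (y j) ≤ δ) →
        dist x y ≤ (∑' k : ℤ, (2 : ℝ) ^ (-|k|)) * δ + ε := by
  set D := diam (univ : Set Y)
  obtain ⟨s, hs⟩ := eventually_atTop.1 <| (tendsto_tsum_compl_atTop_zero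
    fun k : ℤ => (2 : ℝ) ^ (-|k|)).eventually_lt_const (show 0 < ε / (D + 1) by positivity)
  refine ⟨s.sup fun j : ℤ => j.natAbs, fun δ x y hxy => ?_⟩
  set N := s.sup fun j : ℤ => j.natAbs
  set W := Finset.Icc (-(N : ℤ)) N
  have hsW : s ≤ W := fun j hj => by
    have : j.natAbs ≤ N := Finset.le_sup (f := fun j : ℤ => j.natAbs) hj
    rw [Finset.mem_Icc]
    omega
  have hδ : 0 ≤ δ := dist_nonneg.trans (hxy 0 (by simp [W]))
  have hin : ∑ k ∈ W, (2 : ℝ) ^ (-|k|) * dist (x k) (y k)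
      ≤ (∑' k : ℤ, (2 : ℝ) ^ (-|k|)) * δ :=
    calc ∑ k ∈ W, (2 : ℝ) ^ (-|k|) * dist (x k) (y k)
        ≤ ∑ k ∈ W, (2 : ℝ) ^ (-|k|) * δ :=
          Finset.sum_le_sum fun k hk => mul_le_mul_of_nonneg_left (hxy k hk) (by positivity)
      _ = (∑ k ∈ W, (2 : ℝ) ^ (-|k|)) * δ := (Finset.sum_mul ..).symm
      _ ≤ _ := mul_le_mul_of_nonneg_right
          (summable_two_zpow_neg_abs.sum_le_tsum _ fun _ _ => by positivity) hδ
  have hout : ∑' k : {k // k ∉ W}, (2 : ℝ) ^ (-|(k : ℤ)|) * dist (x k) (y k) ≤ ε :=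
    calc ∑' k : {k // k ∉ W}, (2 : ℝ) ^ (-|(k : ℤ)|) * dist (x k) (y k)
        ≤ ∑' k : {k // k ∉ W}, (2 : ℝ) ^ (-|(k : ℤ)|) * D :=
          ((summable_two_zpow_neg_abs_mul_dist x y).subtype _).tsum_le_tsum
            (fun k => mul_le_mul_of_nonneg_left
              (dist_le_diam_of_mem isCompact_univ.isBounded (mem_univ _) (mem_univ _))
              (by positivity))
            ((summable_two_zpow_neg_abs.mul_right D).subtype _)
      _ = (∑' k : {k // k ∉ W}, (2 : ℝ) ^ (-|(k : ℤ)|)) * D := tsum_mul_right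
      _ ≤ ε / (D + 1) * D := mul_le_mul_of_nonneg_right (hs W hsW).le diam_nonneg
      _ ≤ ε := by
          rw [div_mul_eq_mul_div, div_le_iff₀ (by positivity)]
          nlinarith
  rw [hm, ← (summable_two_zpow_neg_abs_mul_dist x y).sum_add_tsum_compl (s := W)]
  exact add_le_add hin hout

lemma IsWeightedSumDist.exists_card_le (hm : IsWeightedSumDist Y) :
    ∃ c > 0, ∀ ε > 0, ∃ M : ℕ, ∀ (n : ℕ) (E : Finset (ℤ → Y)),
      IsDynSeparated (intShift Y) n ε E →
        E.card ≤ sepNum Y (ε / c) ^ (n + (2 * M + 1)) := by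
  classical
  set K := ∑' k : ℤ, (2 : ℝ) ^ (-|k|)
  have hK : 0 < K := summable_two_zpow_neg_abs.tsum_pos (fun _ => by positivity) 0 (by positivity)
  refine ⟨4 * K, by positivity, fun ε hε => ?_⟩
  set r := ε / (4 * K)
  obtain ⟨M, hM⟩ := hm.exists_dist_le (show 0 < ε / 4 by positivity)
  obtain ⟨F, -, hFcard, hFnet⟩ := exists_isSeparatedFinset_card_eq_sepNum (X := Y)
    (show 0 < r by positivity)
  choose p hpF hp using hFnet
  refine ⟨M, fun n E hE => ?_⟩
  let W := Finset.Icc (-(M : ℤ)) (M + n)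
  have hinj : Set.InjOn (fun x : ℤ → Y => fun j : W => p (x j)) E := by
    intro x hx y hy hxy
    by_contra hne
    obtain ⟨k, hk, hfar⟩ := (lt_dynDist_iff hε.le).1 (hE x hx y hy hne)
    rw [intShift_iterate, intShift_iterate] at hfar
    refine hfar.not_ge ((hM (2 * r) _ _ fun j hj => ?_).trans ?_)
    · have hjk : j + k ∈ W := by
        simp only [W, Finset.mem_Icc] at hj ⊢
        omega
      have hpy : dist (y (j + k)) (p (x (j + k))) ≤ r := by
        rw [show p (x (j + k)) = p (y (j + k)) from congrFun hxy ⟨j + k, hjk⟩]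
        exact hp _
      linarith [dist_triangle_right (x (j + k)) (y (j + k)) (p (x (j + k))), hp (x (j + k))]
    · have : K * (2 * r) = ε / 2 := by simp only [r]; field_simp; ring
      linarith
  calc E.card ≤ (Fintype.piFinset fun _ : W => F).card :=
        Finset.card_le_card_of_injOn _ (fun x _ => Fintype.mem_piFinset.2 fun j => hpF _) hinj
    _ = sepNum Y r ^ (n + (2 * M + 1)) := by
        rw [Fintype.card_piFinset, Finset.prod_const, Finset.card_univ, Fintype.card_coe,
          Int.card_Icc, hFcard]
        congr 1
        omega

lemma IsWeightedSumDist.sepNum_pow_le_dynSepNum (hm : IsWeightedSumDist Y) {ε : ℝ} (hε : 0 < ε)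
    {n : ℕ} (hn : n ≠ 0) : sepNum Y ε ^ n ≤ dynSepNum (intShift Y) n ε := by
  classical
  obtain ⟨c, -, hcard⟩ := hm.exists_card_le
  obtain ⟨M, hM⟩ := hcard ε hε
  obtain ⟨F, hF, hFcard, -⟩ := exists_isSeparatedFinset_card_eq_sepNum (X := Y) hε
  let ψ : (Fin n → Y) → ℤ → Y := fun w k =>
    w ⟨k.toNat % n, Nat.mod_lt _ (Nat.pos_of_ne_zero hn)⟩
  have hψ : ∀ w (i : Fin n), ψ w i = w i := fun w i =>
    congrArg w (Fin.ext (by simp [Nat.mod_eq_of_lt i.isLt]))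
  have hψinj : ψ.Injective := fun w w' h => funext fun i => by rw [← hψ w i, ← hψ w' i, h]
  have hsep : IsDynSeparated (intShift Y) n ε ((Fintype.piFinset fun _ => F).image ψ) := by
    simp only [IsDynSeparated, Finset.mem_image, Fintype.mem_piFinset]
    rintro _ ⟨w, hw, rfl⟩ _ ⟨w', hw', rfl⟩ hne
    obtain ⟨i, hi⟩ := Function.ne_iff.1 fun h => hne (congrArg ψ h)
    refine (lt_dynDist_iff hε.le).2 ⟨i, i.isLt, (hF _ (hw i) _ (hw' i) hi).trans_le ?_⟩
    simpa [intShift_iterate, hψ] using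
      hm.dist_apply_zero_le ((intShift Y)^[i] (ψ w)) ((intShift Y)^[i] (ψ w'))
  calc sepNum Y ε ^ n = ((Fintype.piFinset fun _ : Fin n => F).image ψ).card := by
        rw [Finset.card_image_of_injective _ hψinj, Fintype.card_piFinset, Finset.prod_const,
          Finset.card_univ, Fintype.card_fin, hFcard]
    _ ≤ dynSepNum (intShift Y) n ε := card_le_dynSepNum (hM n) hsep

lemma IsWeightedSumDist.ofReal_log_sepNum_le_dynS (hm : IsWeightedSumDist Y) {ε : ℝ}
    (hε : 0 < ε) : ENNReal.ofReal (Real.log (sepNum Y ε)) ≤ dynS (intShift Y) ε :=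
  ofReal_log_le_limsup_ofReal_log_div fun _ hn => hm.sepNum_pow_le_dynSepNum hε hn

lemma IsWeightedSumDist.exists_dynS_le (hm : IsWeightedSumDist Y) :
    ∃ c > 0, ∀ ε > 0,
      dynS (intShift Y) ε ≤ ENNReal.ofReal (Real.log (sepNum Y (ε / c))) := by
  obtain ⟨c, hc, hcard⟩ := hm.exists_card_le
  refine ⟨c, hc, fun ε hε => ?_⟩
  obtain ⟨M, hM⟩ := hcard ε hε
  exact limsup_ofReal_log_div_le fun n => dynSepNum_le_of_forall_card_le (hM n)

end Shift

/-- **Theorem 3.7**: for a compact metric space `(Y,d)`, the upper metric mean dimension of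
the shift on `Y^ℤ` with the metric `d_T(x,y) = ∑_{k ∈ ℤ} 2^{-|k|} d(x_k, y_k)` equals the
upper box dimension of `(Y,d)`. -/
theorem mdim_shift_eq_upperBoxDim
    {Y : Type u} [MetricSpace Y] [CompactSpace Y]
    [m : MetricSpace (ℤ → Y)]
    (hm : ∀ x y : ℤ → Y, dist x y = ∑' k : ℤ, (2:ℝ) ^ (-|k|) * dist (x k) (y k)) :
    mdim (fun x : ℤ → Y => fun k => x (k + 1)) = upperBoxDim Y := by
  obtain ⟨c, hc, hupper⟩ := IsWeightedSumDist.exists_dynS_le (Y := Y) hm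
  change mdim (intShift Y) = upperBoxDim Y
  unfold mdim upperBoxDim
  apply le_antisymm
  · calc limsup (fun ε => dynS (intShift Y) ε / ENNReal.ofReal |Real.log ε|) (𝓝[>] 0)
        ≤ limsup (fun ε => ENNReal.ofReal (Real.log (sepNum Y (ε / c)))
            / ENNReal.ofReal |Real.log ε|) (𝓝[>] 0) :=
          limsup_le_limsup (eventually_nhdsWithin_of_forall fun ε hε =>
            ENNReal.div_le_div_right (hupper ε hε) _)
      _ ≤ _ :=
          limsup_comp_div_div_abs_log_le (fun δ => ENNReal.ofReal (Real.log (sepNum Y δ))) hc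
  · exact limsup_le_limsup (eventually_nhdsWithin_of_forall fun ε hε =>
      ENNReal.div_le_div_right (IsWeightedSumDist.ofReal_log_sepNum_le_dynS (Y := Y) hm hε) _)
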